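/- Suppose K is henselian. Let P be a polynomial with coefficients in the valuation ring 𝒪, let a ∈ 𝒪, and let δ ∈ Γ with δ ≥ 0. If v(P(a)) > 2·v(P′(a)) + δ, then there exists b ∈ 𝒪 with P(b) = 0 and v(a − b) > δ. -/

import Mathlib

/-!
Put `c = P'(a)` and `u = P(a) / c²`, so that `v(u) > δ ≥ 0`. Taylor expansion at `a` gives
`P(a + u c Y) = u c² Q(Y)` with `Q(Y) = 1 + Y + u Y² S(Y)` and `S ∈ 𝒪[Y]`. As `u` lies in the maximal
ideal, the reversed polynomial `Z^(N+2) Q(1/Z)` is monic and congruent to `Z^(N+1) (Z + 1)`, so `-1`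
is a simple root of it modulo the maximal ideal. Hensel's lemma lifts it to a root `z ≡ -1`, a unit,
and `b = a + u c z⁻¹` is a root of `P` with `v(a - b) ≥ v(u) > δ`.
-/

open Polynomial IsLocalRing

theorem IsLocalRing.isUnit_add_of_mem_maximalIdeal {R : Type*} [CommRing R] [IsLocalRing R]
    {a b : R} (ha : IsUnit a) (hb : b ∈ maximalIdeal R) : IsUnit (a + b) := by
  by_contra h
  have : a ∈ maximalIdeal R := by simpa using Ideal.sub_mem _ ((mem_maximalIdeal _).2 h) hb
  exact (mem_maximalIdeal _).1 this ha

theorem Polynomial.exists_eval_add_eq_add_sq_mul_eval {R : Type*} [CommRing R] (p : R[X]) (a : R) :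
    ∃ S : R[X], ∀ y, p.eval (a + y) = p.eval a + p.derivative.eval a * y + y ^ 2 * S.eval y := by
  set T := taylor a p
  refine ⟨T.divX.divX, fun y => ?_⟩
  have h₁ := congrArg (eval y) (divX_mul_X_add T)
  have h₂ := congrArg (eval y) (divX_mul_X_add T.divX)
  simp only [eval_add, eval_mul, eval_X, eval_C, coeff_divX, zero_add, T, taylor_coeff_zero,
    taylor_coeff_one, taylor_eval] at h₁ h₂
  rw [add_comm a y, ← h₁, ← h₂]
  ring

theorem HenselianLocalRing.exists_one_add_add_mul_sq_mul_eval_eq_zero {R : Type*} [CommRing R]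
    [HenselianLocalRing R] {u : R} (hu : u ∈ maximalIdeal R) (S : R[X]) :
    ∃ y, 1 + y + u * y ^ 2 * S.eval y = 0 := by
  set N := S.natDegree
  -- `G(z) = z ^ (N + 2) * (1 + y + u * y ^ 2 * S(y))` for `y = z⁻¹`
  set G : R[X] := X ^ (N + 2) + (X ^ (N + 1) + C u * S.reflect N)
  have hG : G.Monic := by
    refine monic_X_pow_add ((degree_le_natDegree).trans_lt ?_)
    have : (X ^ (N + 1) + C u * S.reflect N).natDegree ≤ N + 1 :=
      natDegree_add_le_of_degree_le (natDegree_X_pow_le _)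
        ((natDegree_C_mul_le _ _).trans (natDegree_reflect_le.trans (by simp [N])))
    exact_mod_cast Nat.lt_succ_of_le this
  have hG₁ : G.eval (-1) ∈ maximalIdeal R := by
    have : G.eval (-1) = u * (S.reflect N).eval (-1) := by
      simp only [G, eval_add, eval_pow, eval_X, eval_mul, eval_C]
      ring
    exact this ▸ Ideal.mul_mem_right _ _ hu
  have hG₂ : IsUnit (G.derivative.eval (-1)) := by
    have : G.derivative.eval (-1) = (-1) ^ (N + 1) + u * (S.reflect N).derivative.eval (-1) := by
      simp only [G, derivative_add, derivative_X_pow, derivative_mul, derivative_C, eval_add,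
        eval_mul, eval_pow, eval_X, eval_C, zero_mul, zero_add, Nat.add_sub_cancel]
      push_cast
      ring
    exact this ▸ isUnit_add_of_mem_maximalIdeal (isUnit_one.neg.pow _) (Ideal.mul_mem_right _ _ hu)
  obtain ⟨z, hz, hz₁⟩ := HenselianLocalRing.is_henselian G hG (-1) hG₁ hG₂
  obtain ⟨w, rfl⟩ : IsUnit z := by simpa using isUnit_add_of_mem_maximalIdeal isUnit_one.neg hz₁
  let _ := w⁻¹.invertible
  have hS := eval₂_reflect_mul_pow (RingHom.id R) (↑w⁻¹ : R) N S le_rfl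
  simp only [invOf_units, inv_inv, eval₂_id] at hS
  refine ⟨↑w⁻¹, ?_⟩
  calc 1 + ↑w⁻¹ + u * ↑w⁻¹ ^ 2 * S.eval ↑w⁻¹
      = (↑w⁻¹ * ↑w) ^ (N + 2) + (↑w⁻¹ * ↑w) ^ (N + 1) * ↑w⁻¹
        + u * ↑w⁻¹ ^ 2 * ((S.reflect N).eval ↑w * ↑w⁻¹ ^ N) := by
        rw [hS, Units.inv_mul, one_pow, one_pow, one_mul]
    _ = ↑w⁻¹ ^ (N + 2) * G.eval ↑w := by
        simp only [G, eval_add, eval_pow, eval_X, eval_mul, eval_C]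
        ring
    _ = 0 := by rw [hz.eq_zero, mul_zero]

theorem HenselianLocalRing.exists_isRoot_add_mul_of_eval_eq_mul_sq {R : Type*} [CommRing R]
    [HenselianLocalRing R] (p : R[X]) {a u : R} (hu : u ∈ maximalIdeal R)
    (hpa : p.eval a = u * p.derivative.eval a ^ 2) :
    ∃ y, p.IsRoot (a + u * p.derivative.eval a * y) := by
  obtain ⟨S, hS⟩ := p.exists_eval_add_eq_add_sq_mul_eval a
  set c := p.derivative.eval a
  obtain ⟨y, hy⟩ := exists_one_add_add_mul_sq_mul_eval_eq_zero hu (S.comp (C (u * c) * X))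
  refine ⟨y, ?_⟩
  simp only [eval_comp, eval_mul, eval_C, eval_X] at hy
  rw [IsRoot, hS, hpa]
  linear_combination u * c ^ 2 * hy

section Valuation

variable {K Γ : Type*} [Field K] [AddCommGroup Γ] [LinearOrder Γ] [IsOrderedAddMonoid Γ]

theorem map_one_eq_zero_of_map_mul {v : K → WithTop Γ} (hv0 : ∀ x, v x = ⊤ ↔ x = 0)
    (hvmul : ∀ x y, v (x * y) = v x + v y) : v 1 = 0 := by
  obtain ⟨γ, hγ⟩ := WithTop.ne_top_iff_exists.1 (mt (hv0 1).1 one_ne_zero)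
  have h := hvmul 1 1
  rw [mul_one, ← hγ, ← WithTop.coe_add, WithTop.coe_inj] at h
  rw [← hγ, ← WithTop.coe_zero, WithTop.coe_inj]
  exact left_eq_add.1 h

namespace AddValuation

variable (w : AddValuation K (WithTop Γ)) {O : Subring K} (hO : ∀ x, x ∈ O ↔ 0 ≤ w x)
include hO

theorem mem_maximalIdeal_of_pos [IsLocalRing O] {x : O} (hx : 0 < w x) :
    x ∈ maximalIdeal O := by
  refine (mem_maximalIdeal _).2 fun hunit => ?_
  obtain ⟨y, hxy⟩ := hunit.exists_right_inv
  have h := congrArg (w ∘ Subtype.val) hxy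
  simp only [Function.comp_apply, Subring.coe_mul, Subring.coe_one, map_mul, map_one] at h
  exact (add_pos_of_pos_of_nonneg hx ((hO y).1 y.2)).ne' h

theorem hensels_lemma [HenselianLocalRing O] (P : K[X]) (hP : ∀ i, P.coeff i ∈ O) {a : K}
    (ha : a ∈ O) {δ : Γ} (hδ : 0 ≤ δ)
    (hcond : w (P.derivative.eval a) + w (P.derivative.eval a) + δ < w (P.eval a)) :
    ∃ b ∈ O, P.eval b = 0 ∧ δ < w (a - b) := by
  obtain ⟨Q, rfl⟩ := (mem_lifts P).1 <|
    (lifts_iff_coeff_lifts (f := O.subtype) P).2 fun n => ⟨⟨_, hP n⟩, rfl⟩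
  set a' : O := ⟨a, ha⟩
  have heval (R : O[X]) : (R.map O.subtype).eval a = R.eval a' := eval_map_apply O.subtype a'
  set c := Q.derivative.eval a'
  rw [derivative_map, heval, heval] at hcond
  have hc0 : (c : K) ≠ 0 := by
    intro h
    rw [h, map_zero, top_add, top_add] at hcond
    exact not_top_lt hcond
  set u : K := Q.eval a' / (c : K) ^ 2
  have hu : δ < w u := by
    have hcc : w c + w c ≠ ⊤ := by simp [hc0]
    rw [← div_mul_cancel₀ ((Q.eval a' : O) : K) (pow_ne_zero 2 hc0), map_mul, map_pow, two_nsmul,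
      add_comm _ (w c + w c)] at hcond
    exact (WithTop.add_lt_add_iff_left hcc).1 hcond
  have hu₀ : 0 < w u := (WithTop.coe_nonneg.2 hδ).trans_lt hu
  set u' : O := ⟨u, (hO u).2 hu₀.le⟩
  obtain ⟨y, hy⟩ : ∃ y, Q.IsRoot (a' + u' * c * y) :=
    HenselianLocalRing.exists_isRoot_add_mul_of_eval_eq_mul_sq Q (a := a')
    (w.mem_maximalIdeal_of_pos hO (x := u') hu₀)
    (Subtype.ext (by simp [u', u, c, hc0]))
  refine ⟨_, (a' + u' * c * y).2, ?_, ?_⟩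
  · rw [← O.coe_subtype, eval_map_apply, hy.eq_zero, _root_.map_zero]
  · have hab : a - ↑(a' + u' * c * y) = -(u * c * y) := by
      simp only [Subring.coe_add, Subring.coe_mul, a', u']
      ring
    rw [hab, map_neg, map_mul, map_mul]
    exact hu.trans_le ((le_add_of_nonneg_right ((hO _).1 c.2)).trans
      (le_add_of_nonneg_right ((hO _).1 y.2)))

end AddValuation

end Valuation

theorem stmt_8_general {K : Type*} [Field K] {Γ : Type*} [AddCommGroup Γ] [LinearOrder Γ] [IsOrderedAddMonoid Γ]
    (v : K → WithTop Γ)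
    (hv0 : ∀ x : K, v x = ⊤ ↔ x = 0)
    (hvmul : ∀ x y : K, v (x * y) = v x + v y)
    (hvadd : ∀ x y : K, min (v x) (v y) ≤ v (x + y))
    (O : Subring K) (hO : ∀ x : K, x ∈ O ↔ 0 ≤ v x) [HenselianLocalRing O]
    (P : Polynomial K) (hP : ∀ i, P.coeff i ∈ O)
    (a : K) (ha : a ∈ O) (δ : Γ) (hδ : 0 ≤ δ)
    (hcond : v (P.derivative.eval a) + v (P.derivative.eval a) + (δ : WithTop Γ)
      < v (P.eval a)) :
    ∃ b : K, b ∈ O ∧ P.eval b = 0 ∧ (δ : WithTop Γ) < v (a - b) :=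
  AddValuation.hensels_lemma
    (.of v ((hv0 0).2 rfl) (map_one_eq_zero_of_map_mul hv0 hvmul) hvadd hvmul) hO P hP ha hδ hcond

/-- If `K` is henselian, `P ∈ 𝒪[x]`, `a ∈ 𝒪`, `δ ≥ 0`, and
`v(P(a)) > 2·v(P′(a)) + δ`, then there is `b ∈ 𝒪` with `P(b) = 0` and
`v(a − b) > δ`. -/
theorem stmt_8 {K : Type*} [Field K] {Γ : Type*} [AddCommGroup Γ] [LinearOrder Γ] [IsOrderedAddMonoid Γ]
    (v : K → WithTop Γ) (hsurj : Function.Surjective v)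
    (hv0 : ∀ x : K, v x = ⊤ ↔ x = 0)
    (hvmul : ∀ x y : K, v (x * y) = v x + v y)
    (hvadd : ∀ x y : K, min (v x) (v y) ≤ v (x + y))
    (O : Subring K) (hO : ∀ x : K, x ∈ O ↔ 0 ≤ v x) [HenselianLocalRing O]
    (P : Polynomial K) (hP : ∀ i, P.coeff i ∈ O)
    (a : K) (ha : a ∈ O) (δ : Γ) (hδ : 0 ≤ δ)
    (hcond : v (P.derivative.eval a) + v (P.derivative.eval a) + (δ : WithTop Γ)
      < v (P.eval a)) :
    ∃ b : K, b ∈ O ∧ P.eval b = 0 ∧ (δ : WithTop Γ) < v (a - b) :=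
  stmt_8_general v hv0 hvmul hvadd O hO P hP a ha δ hδ hcond
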